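/- A set Q of subsets of X_n is an optimal set of questions — i.e., c_Q(μ) = Opt(μ) for every probability distribution μ on X_n — if and only if Q is a dyadic hitter, i.e., for every non-constant dyadic distribution μ on X_n there exists A ∈ Q with μ(A) = 1/2. -/

import Mathlib

namespace TQ

/-- A decision tree: internal nodes are labeled by questions (subsets of `α`,
with the two children corresponding to Yes/No), leaves by elements of `α`. -/
inductive DTree (α : Type) where
  | leaf (x : α) : DTree α
  | node (q : Finset α) (yes no : DTree α) : DTree α

namespace DTree

variable {α : Type} [DecidableEq α]

/-- The list of leaf labels of a decision tree. -/
def leaves : DTree α → List α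
  | .leaf x => [x]
  | .node _ t f => leaves t ++ leaves f

/-- The set of questions appearing at internal nodes. -/
def questions : DTree α → Set (Finset α)
  | .leaf _ => ∅
  | .node q t f => insert q (questions t ∪ questions f)

/-- Follow the path of `x` (Yes-edge iff `x` belongs to the question);
returns `some d` iff the path ends at a leaf labeled `x`, at depth `d`. -/
def find? : DTree α → α → Option ℕ
  | .leaf y, x => if y = x then some 0 else none
  | .node q t f, x => (if x ∈ q then find? t x else find? f x).map (· + 1)

/-- The depth of the leaf labeled `x` (junk value `0` if the path of `x`
does not end at a leaf labeled `x`). -/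
def depth (T : DTree α) (x : α) : ℕ := (T.find? x).getD 0

end DTree

variable {α : Type} [Fintype α] [DecidableEq α]

/-- `μ` is a probability distribution on `α`. -/
def IsDistribution (μ : α → ℝ) : Prop := (∀ x, 0 ≤ μ x) ∧ ∑ x, μ x = 1

/-- `T` is valid for `μ`: its leaves are distinct, the set of leaf labels is the
support of `μ`, and for every `x` in the support the path of `x` ends at the
leaf labeled `x`. -/
structure IsValid (T : DTree α) (μ : α → ℝ) : Prop where
  nodup : T.leaves.Nodup
  mem_leaves : ∀ x, x ∈ T.leaves ↔ μ x ≠ 0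
  finds : ∀ x, μ x ≠ 0 → T.find? x = some (T.depth x)

/-- The cost of `T` on `μ`: the average depth `∑ x, μ(x) · T(x)`. -/
noncomputable def cost (T : DTree α) (μ : α → ℝ) : ℝ := ∑ x, μ x * (T.depth x : ℝ)

/-- All questions of `T` belong to `Q`. -/
def UsesQuestions (T : DTree α) (Q : Set (Finset α)) : Prop := T.questions ⊆ Q

/-- `Opt(μ)`: the optimal cost over all decision trees valid for `μ`. -/
noncomputable def OptCost (μ : α → ℝ) : ℝ :=
  sInf { c | ∃ T : DTree α, IsValid T μ ∧ c = cost T μ }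

/-- `c_Q(μ)`: the optimal cost over decision trees valid for `μ`
using only questions from `Q`. -/
noncomputable def cQ (Q : Set (Finset α)) (μ : α → ℝ) : ℝ :=
  sInf { c | ∃ T : DTree α, IsValid T μ ∧ UsesQuestions T Q ∧ c = cost T μ }

/-- The base-2 (Shannon) entropy of `μ`. (Note `Real.logb 2 0 = 0`.) -/
noncomputable def entropy (μ : α → ℝ) : ℝ := ∑ x, -(μ x * Real.logb 2 (μ x))

/-- `Q` achieves prolixity `r`: for every distribution there is a valid tree using
only questions from `Q` of cost at most `Opt(μ) + r`. -/
def AchievesProlixity {n : ℕ} (Q : Finset (Finset (Fin n))) (r : ℝ) : Prop :=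
  ∀ μ : Fin n → ℝ, IsDistribution μ →
    ∃ T : DTree (Fin n), IsValid T μ ∧ UsesQuestions T ↑Q ∧ cost T μ ≤ OptCost μ + r

/-- `Q` achieves redundancy `r`: for every distribution there is a valid tree using
only questions from `Q` of cost at most `H(μ) + r`. -/
def AchievesRedundancy {n : ℕ} (Q : Finset (Finset (Fin n))) (r : ℝ) : Prop :=
  ∀ μ : Fin n → ℝ, IsDistribution μ →
    ∃ T : DTree (Fin n), IsValid T μ ∧ UsesQuestions T ↑Q ∧ cost T μ ≤ entropy μ + r

/-- `u_Opt(n,r)`: the minimum cardinality of a set of questions achieving prolixity `r`. -/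
noncomputable def uOpt (n : ℕ) (r : ℝ) : ℕ :=
  sInf { k | ∃ Q : Finset (Finset (Fin n)), Q.card = k ∧ AchievesProlixity Q r }

/-- `u_H(n,r)`: the minimum cardinality of a set of questions achieving redundancy `r`. -/
noncomputable def uH (n : ℕ) (r : ℝ) : ℕ :=
  sInf { k | ∃ Q : Finset (Finset (Fin n)), Q.card = k ∧ AchievesRedundancy Q r }

end TQ

namespace TQ

/-- `μ` is dyadic: every probability is `0` or an integer power of `1/2`. -/
def IsDyadic {α : Type} (μ : α → ℝ) : Prop :=
  ∀ x, μ x = 0 ∨ ∃ d : ℤ, μ x = (1 / 2 : ℝ) ^ d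

/-- `μ` is non-constant: its support has at least two elements. -/
def NonConstant {α : Type} (μ : α → ℝ) : Prop :=
  ∃ x y, x ≠ y ∧ μ x ≠ 0 ∧ μ y ≠ 0

end TQ

/-!
Kraft's equality: the depths `k` of a valid decision tree satisfy `∑ 2⁻¹ ^ k x = 1`.
Conversely, a complete dyadic weighting `2⁻¹ ^ k` of a set is realized by a tree as soon as
every such weighting (of two or more points) can be cut into two halves by an available
question; dyadic hitters are exactly the question sets that can do this, and all questions
together can (a greedy subset sum). So a dyadic hitter imitates the depth profile of any valid
tree, whence `c_Q = Opt`.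

For the converse let `μ = 2⁻¹ ^ d` be dyadic and non-constant. Gibbs' inequality gives
`Opt(μ) = ∑ μ x d x`, attained exactly by the trees with depths `d`. All costs lie in
`2⁻¹ ^ D ℕ`, so `c_Q(μ) = Opt(μ)` is attained by such a tree using questions from `Q`, and
by Kraft's equality its root question has mass `1/2`.
-/

theorem Real.csInf_mem_of_forall_exists_nat_mul {s : Set ℝ} {c : ℝ} (hc : 0 < c)
    (hs : s.Nonempty) (h : ∀ y ∈ s, ∃ m : ℕ, y = m * c) : sInf s ∈ s := by
  have hK : {m : ℕ | (m * c : ℝ) ∈ s}.Nonempty := by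
    obtain ⟨y, hy⟩ := hs
    obtain ⟨m, rfl⟩ := h y hy
    exact ⟨m, hy⟩
  have hleast : IsLeast s (sInf {m : ℕ | (m * c : ℝ) ∈ s} * c) := by
    refine ⟨Nat.sInf_mem hK, fun y hy => ?_⟩
    obtain ⟨m, rfl⟩ := h y hy
    exact mul_le_mul_of_nonneg_right (Nat.cast_le.mpr (Nat.sInf_le hy)) hc.le
  exact hleast.csInf_eq ▸ hleast.1

namespace TQ

open Finset

section PowersOfTwo

variable {ι : Type} {S : Finset ι} {k : ι → ℕ}

theorem inv_two_pow_eq_two_pow_sub_mul {a K : ℕ} (h : a ≤ K) :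
    (2⁻¹ : ℝ) ^ a = 2 ^ (K - a) * 2⁻¹ ^ K := by
  rw [pow_sub₀ (2 : ℝ) two_ne_zero h, inv_pow, inv_pow]
  field_simp

theorem sum_inv_two_pow_eq_half_mul (hk : ∀ x ∈ S, 1 ≤ k x) :
    ∑ x ∈ S, (2⁻¹ : ℝ) ^ k x = 2⁻¹ * ∑ x ∈ S, (2⁻¹ : ℝ) ^ (k x - 1) := by
  rw [mul_sum]
  refine sum_congr rfl fun x hx => ?_
  rw [← pow_succ', Nat.sub_add_cancel (hk x hx)]

theorem one_le_of_sum_inv_two_pow_eq_one (h : ∑ x ∈ S, (2⁻¹ : ℝ) ^ k x = 1)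
    (hS : S.Nontrivial) {x : ι} (hx : x ∈ S) : 1 ≤ k x := by
  obtain ⟨y, hy, hyx⟩ := hS.exists_ne x
  have hle := add_le_sum (f := fun z => (2⁻¹ : ℝ) ^ k z) (fun _ _ => by positivity) hx hy hyx.symm
  by_contra hkx
  rw [Nat.lt_one_iff.mp (not_le.mp hkx), h] at hle
  have : (0 : ℝ) < 2⁻¹ ^ k y := by positivity
  simp only [pow_zero] at hle
  linarith

theorem inv_two_pow_eq_mul_exp (d e : ℕ) :
    (2⁻¹ : ℝ) ^ e = 2⁻¹ ^ d * Real.exp ((d - e) * Real.log 2) := by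
  rw [sub_mul, Real.exp_sub, Real.exp_nat_mul, Real.exp_nat_mul, Real.exp_log two_pos, inv_pow,
    inv_pow]
  field_simp

/-- Pointwise Gibbs inequality, from `y + 1 ≤ exp y` with `y = (d - e) log 2`. -/
theorem inv_two_pow_mul_log_le (d e : ℕ) :
    (2⁻¹ : ℝ) ^ d * ((d - e) * Real.log 2) ≤ 2⁻¹ ^ e - 2⁻¹ ^ d := by
  have := Real.add_one_le_exp ((d - e) * Real.log 2)
  rw [inv_two_pow_eq_mul_exp d e]
  nlinarith [pow_pos (by norm_num : (0 : ℝ) < 2⁻¹) d]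

theorem inv_two_pow_mul_log_lt {d e : ℕ} (hde : d ≠ e) :
    (2⁻¹ : ℝ) ^ d * ((d - e) * Real.log 2) < 2⁻¹ ^ e - 2⁻¹ ^ d := by
  have hy : ((d : ℝ) - e) * Real.log 2 ≠ 0 :=
    mul_ne_zero (sub_ne_zero.mpr (Nat.cast_injective.ne hde)) (Real.log_pos one_lt_two).ne'
  have := Real.add_one_lt_exp hy
  rw [inv_two_pow_eq_mul_exp d e]
  nlinarith [pow_pos (by norm_num : (0 : ℝ) < 2⁻¹) d]

theorem sum_inv_two_pow_mul_log_eq (d e : ι → ℕ) :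
    ∑ x ∈ S, (2⁻¹ : ℝ) ^ d x * ((d x - e x) * Real.log 2) =
      (∑ x ∈ S, (2⁻¹ : ℝ) ^ d x * d x - ∑ x ∈ S, (2⁻¹ : ℝ) ^ d x * e x) * Real.log 2 := by
  rw [← sum_sub_distrib, sum_mul]
  exact sum_congr rfl fun x _ => by ring

/-- Gibbs' inequality for the dyadic distribution `2⁻¹ ^ d` against the sub-distribution
`2⁻¹ ^ e`. -/
theorem sum_inv_two_pow_mul_le {d e : ι → ℕ} (hd : ∑ x ∈ S, (2⁻¹ : ℝ) ^ d x = 1)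
    (he : ∑ x ∈ S, (2⁻¹ : ℝ) ^ e x ≤ 1) :
    ∑ x ∈ S, (2⁻¹ : ℝ) ^ d x * d x ≤ ∑ x ∈ S, (2⁻¹ : ℝ) ^ d x * e x := by
  have h := sum_le_sum fun x (_ : x ∈ S) => inv_two_pow_mul_log_le (d x) (e x)
  rw [sum_inv_two_pow_mul_log_eq, sum_sub_distrib, hd] at h
  nlinarith [Real.log_pos one_lt_two]

theorem sum_inv_two_pow_mul_lt {d e : ι → ℕ} (hd : ∑ x ∈ S, (2⁻¹ : ℝ) ^ d x = 1)
    (he : ∑ x ∈ S, (2⁻¹ : ℝ) ^ e x ≤ 1) {x : ι} (hx : x ∈ S) (hde : d x ≠ e x) :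
    ∑ x ∈ S, (2⁻¹ : ℝ) ^ d x * d x < ∑ x ∈ S, (2⁻¹ : ℝ) ^ d x * e x := by
  have h := sum_lt_sum (fun y (_ : y ∈ S) => inv_two_pow_mul_log_le (d y) (e y))
    ⟨x, hx, inv_two_pow_mul_log_lt hde⟩
  rw [sum_inv_two_pow_mul_log_eq, sum_sub_distrib, hd] at h
  nlinarith [Real.log_pos one_lt_two]

theorem exists_subset_sum_eq_of_two_pow [DecidableEq ι] {w : ι → ℕ}
    (hw : ∀ x ∈ S, ∃ j, w x = 2 ^ j) {t : ℕ} (hdvd : ∀ x ∈ S, w x ∣ t)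
    (ht : t ≤ ∑ x ∈ S, w x) : ∃ A ⊆ S, ∑ x ∈ A, w x = t := by
  induction S using Finset.induction_on_max_value w generalizing t with
  | empty => exact ⟨∅, empty_subset _, by simp_all⟩
  | insert a S ha hmax ih =>
    rcases Nat.eq_zero_or_pos t with rfl | htpos
    · exact ⟨∅, empty_subset _, rfl⟩
    have hwa : w a ≤ t := Nat.le_of_dvd htpos (hdvd a (mem_insert_self a S))
    have hdvd_wa : ∀ x ∈ S, w x ∣ w a := fun x hx => by
      obtain ⟨i, hi⟩ := hw x (mem_insert_of_mem hx)
      obtain ⟨j, hj⟩ := hw a (mem_insert_self a S)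
      have := hmax x hx
      rw [hi, hj] at this ⊢
      exact pow_dvd_pow 2 ((Nat.pow_le_pow_iff_right one_lt_two).mp this)
    rw [sum_insert ha] at ht
    obtain ⟨A, hAS, hA⟩ := ih (fun x hx => hw x (mem_insert_of_mem hx))
      (fun x hx => Nat.dvd_sub (hdvd x (mem_insert_of_mem hx)) (hdvd_wa x hx)) (by omega)
    refine ⟨insert a A, insert_subset_insert a hAS, ?_⟩
    rw [sum_insert fun h => ha (hAS h), hA]
    omega

end PowersOfTwo

namespace DTree

variable {α : Type} [DecidableEq α]

theorem mem_leaves_of_find?_eq_some {T : DTree α} {x : α} {e : ℕ} (h : T.find? x = some e) :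
    x ∈ T.leaves := by
  induction T generalizing e with
  | leaf y => by_cases hy : y = x <;> simp_all [find?, leaves]
  | node q t f iht ihf =>
    by_cases hq : x ∈ q <;> simp only [find?, hq, if_true, if_false, Option.map_eq_some_iff] at h
    all_goals obtain ⟨e', he', -⟩ := h
    · exact List.mem_append_left _ (iht he')
    · exact List.mem_append_right _ (ihf he')

theorem find?_node_eq_some {q : Finset α} {t f : DTree α} {x : α} {e : ℕ} :
    (node q t f).find? x = some e ↔ 1 ≤ e ∧ (if x ∈ q then t else f).find? x = some (e - 1) := by
  rw [find?, ← apply_ite (find? · x), Option.map_eq_some_iff]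
  constructor
  · rintro ⟨e', he', rfl⟩
    simpa using he'
  · rintro ⟨he, h⟩
    exact ⟨e - 1, h, Nat.sub_add_cancel he⟩

/-- `T` is a prefix code for `S` with codeword lengths `k`. -/
structure Realizes (T : DTree α) (S : Finset α) (k : α → ℕ) : Prop where
  nodup : T.leaves.Nodup
  toFinset_leaves : T.leaves.toFinset = S
  find?_eq : ∀ x ∈ S, T.find? x = some (k x)

variable {T : DTree α} {S : Finset α} {k : α → ℕ}

theorem Realizes.depth_eq (h : T.Realizes S k) {x : α} (hx : x ∈ S) : T.depth x = k x := by
  rw [depth, h.find?_eq x hx, Option.getD_some]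

theorem Realizes.realizes_depth (h : T.Realizes S k) : T.Realizes S T.depth :=
  ⟨h.nodup, h.toFinset_leaves, fun x hx => h.depth_eq hx ▸ h.find?_eq x hx⟩

theorem realizes_leaf_iff {y : α} : (leaf y).Realizes S k ↔ S = {y} ∧ k y = 0 := by
  constructor
  · rintro ⟨-, hS, hk⟩
    have hS : S = {y} := by simpa [leaves] using hS.symm
    subst hS
    simpa [find?, eq_comm] using hk y (mem_singleton_self y)
  · rintro ⟨rfl, hk⟩
    exact ⟨List.nodup_singleton y, by simp [leaves], by simp [find?, hk]⟩

theorem Realizes.one_le_of_node {q : Finset α} {t f : DTree α} (h : (node q t f).Realizes S k)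
    {x : α} (hx : x ∈ S) : 1 ≤ k x :=
  (find?_node_eq_some.mp (h.find?_eq x hx)).1

theorem Realizes.node_left {q : Finset α} {t f : DTree α} (h : (node q t f).Realizes S k) :
    t.Realizes (S ∩ q) (k · - 1) := by
  obtain ⟨hnd, hS, hk⟩ := h
  rw [leaves, List.nodup_append] at hnd
  have hfind := fun x hx => (find?_node_eq_some.mp (hk x hx)).2
  refine ⟨hnd.1, ?_, fun x hx => by simpa [(mem_inter.mp hx).2] using hfind x (mem_inter.mp hx).1⟩
  have hxS : ∀ x ∈ t.leaves, x ∈ S := fun x hxt => by simp [← hS, leaves, hxt]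
  ext x
  rw [List.mem_toFinset, mem_inter]
  refine ⟨fun hxt => ⟨hxS x hxt, by_contra fun hxq => ?_⟩, fun ⟨hx, hxq⟩ => ?_⟩
  · have := hfind x (hxS x hxt)
    rw [if_neg hxq] at this
    exact hnd.2.2 x hxt x (mem_leaves_of_find?_eq_some this) rfl
  · have := hfind x hx
    rw [if_pos hxq] at this
    exact mem_leaves_of_find?_eq_some this

theorem Realizes.node_right {q : Finset α} {t f : DTree α} (h : (node q t f).Realizes S k) :
    f.Realizes (S \ q) (k · - 1) := by
  obtain ⟨hnd, hS, hk⟩ := h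
  rw [leaves, List.nodup_append] at hnd
  have hfind := fun x hx => (find?_node_eq_some.mp (hk x hx)).2
  refine ⟨hnd.2.1, ?_, fun x hx => by simpa [(mem_sdiff.mp hx).2] using hfind x (mem_sdiff.mp hx).1⟩
  have hxS : ∀ x ∈ f.leaves, x ∈ S := fun x hxf => by simp [← hS, leaves, hxf]
  ext x
  rw [List.mem_toFinset, mem_sdiff]
  refine ⟨fun hxf => ⟨hxS x hxf, fun hxq => ?_⟩, fun ⟨hx, hxq⟩ => ?_⟩
  · have := hfind x (hxS x hxf)
    rw [if_pos hxq] at this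
    exact hnd.2.2 x (mem_leaves_of_find?_eq_some this) x hxf rfl
  · have := hfind x hx
    rw [if_neg hxq] at this
    exact mem_leaves_of_find?_eq_some this

theorem Realizes.node {q : Finset α} {t f : DTree α} (hk : ∀ x ∈ S, 1 ≤ k x)
    (ht : t.Realizes (S ∩ q) (k · - 1)) (hf : f.Realizes (S \ q) (k · - 1)) :
    (node q t f).Realizes S k := by
  refine ⟨?_, ?_, fun x hx => find?_node_eq_some.mpr ⟨hk x hx, ?_⟩⟩
  · rw [leaves, List.nodup_append]
    refine ⟨ht.nodup, hf.nodup, fun a hat b hbf hab => ?_⟩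
    rw [← List.mem_toFinset, ht.toFinset_leaves] at hat
    rw [← List.mem_toFinset, hf.toFinset_leaves] at hbf
    exact (mem_sdiff.mp hbf).2 (hab ▸ (mem_inter.mp hat).2)
  · rw [leaves, List.toFinset_append, ht.toFinset_leaves, hf.toFinset_leaves, union_comm,
      sdiff_union_inter]
  · by_cases hxq : x ∈ q
    · rw [if_pos hxq]
      exact ht.find?_eq x (mem_inter.mpr ⟨hx, hxq⟩)
    · rw [if_neg hxq]
      exact hf.find?_eq x (mem_sdiff.mpr ⟨hx, hxq⟩)

/-- Kraft's equality: decision trees are complete prefix codes. -/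
theorem Realizes.sum_inv_two_pow_eq_one (h : T.Realizes S k) :
    ∑ x ∈ S, (2⁻¹ : ℝ) ^ k x = 1 := by
  induction T generalizing S k with
  | leaf y =>
    obtain ⟨rfl, hk⟩ := realizes_leaf_iff.mp h
    simp [hk]
  | node q t f iht ihf =>
    rw [← sum_inter_add_sum_sdiff S q,
      sum_inv_two_pow_eq_half_mul fun x hx => h.one_le_of_node (mem_inter.mp hx).1,
      sum_inv_two_pow_eq_half_mul fun x hx => h.one_le_of_node (mem_sdiff.mp hx).1,
      iht h.node_left, ihf h.node_right]
    norm_num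

theorem Realizes.exists_sum_inter_eq_half {Q : Set (Finset α)} (h : T.Realizes S k)
    (hQ : UsesQuestions T Q) (hS : S.Nontrivial) :
    ∃ A ∈ Q, ∑ x ∈ S ∩ A, (2⁻¹ : ℝ) ^ k x = 1 / 2 := by
  cases T with
  | leaf y =>
    obtain ⟨rfl, -⟩ := realizes_leaf_iff.mp h
    exact absurd hS (not_nontrivial_singleton)
  | node q t f =>
    refine ⟨q, hQ (Set.mem_insert q _), ?_⟩
    rw [sum_inv_two_pow_eq_half_mul fun x hx => h.one_le_of_node (mem_inter.mp hx).1,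
      h.node_left.sum_inv_two_pow_eq_one]
    norm_num

end DTree

open DTree

section Splitting

variable {α : Type} [DecidableEq α]

/-- The dyadic-hitter condition, for the dyadic distribution `2⁻¹ ^ k` carried by `S`. -/
def SplitsDyadic (Q : Set (Finset α)) : Prop :=
  ∀ (S : Finset α) (k : α → ℕ), S.Nontrivial → ∑ x ∈ S, (2⁻¹ : ℝ) ^ k x = 1 →
    ∃ A ∈ Q, ∑ x ∈ S ∩ A, (2⁻¹ : ℝ) ^ k x = 1 / 2

/-- Greedy subset sum: in units of the smallest weight `2⁻¹ ^ K` all weights are powers of two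
dividing the target `2 ^ (K - 1)`. -/
theorem splitsDyadic_univ : SplitsDyadic (Set.univ : Set (Finset α)) := by
  intro S k hS hsum
  have hk := fun x (hx : x ∈ S) => one_le_of_sum_inv_two_pow_eq_one hsum hS hx
  set K := S.sup k
  have hkK : ∀ x ∈ S, k x ≤ K := fun x hx => le_sup hx
  obtain ⟨a, ha⟩ := hS.nonempty
  have hK : 1 ≤ K := (hk a ha).trans (hkK a ha)
  have hscale : ∀ A ⊆ S, ∑ x ∈ A, (2⁻¹ : ℝ) ^ k x = (∑ x ∈ A, 2 ^ (K - k x) : ℕ) * 2⁻¹ ^ K :=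
    fun A hA => by
      push_cast
      rw [sum_mul]
      exact sum_congr rfl fun x hx => inv_two_pow_eq_two_pow_sub_mul (hkK x (hA hx))
  have htotal : ∑ x ∈ S, 2 ^ (K - k x) = 2 ^ K := by
    have h := hscale S subset_rfl
    rw [hsum, eq_comm, ← eq_div_iff (by positivity), one_div, inv_pow, inv_inv] at h
    exact_mod_cast h
  obtain ⟨A, hAS, hA⟩ := exists_subset_sum_eq_of_two_pow (w := fun x => 2 ^ (K - k x))
    (fun x _ => ⟨_, rfl⟩) (t := 2 ^ (K - 1))
    (fun x hx => pow_dvd_pow 2 (by have := hk x hx; omega))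
    (htotal ▸ Nat.pow_le_pow_right two_pos (Nat.sub_le K 1))
  refine ⟨A, Set.mem_univ A, ?_⟩
  rw [inter_eq_right.mpr hAS, hscale A hAS, hA, Nat.cast_pow, Nat.cast_ofNat,
    pow_sub₀ _ two_ne_zero hK, inv_pow]
  field_simp

theorem exists_realizes_of_splitsDyadic {Q : Set (Finset α)} (hQ : SplitsDyadic Q)
    {S : Finset α} (hS : S.Nonempty) {k : α → ℕ} (hsum : ∑ x ∈ S, (2⁻¹ : ℝ) ^ k x = 1) :
    ∃ T : DTree α, T.Realizes S k ∧ UsesQuestions T Q := by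
  induction S using Finset.strongInduction generalizing k with
  | H S ih =>
    obtain ⟨a, rfl⟩ | hnt := hS.exists_eq_singleton_or_nontrivial
    · rw [sum_singleton] at hsum
      have hka : k a = 0 := by
        by_contra h
        exact (pow_lt_one₀ (by norm_num) (by norm_num) h).ne hsum
      exact ⟨leaf a, realizes_leaf_iff.mpr ⟨rfl, hka⟩, Set.empty_subset Q⟩
    obtain ⟨A, hA, hAsum⟩ := hQ S k hnt hsum
    have hk := fun x (hx : x ∈ S) => one_le_of_sum_inv_two_pow_eq_one hsum hnt hx
    have hsdiff : ∑ x ∈ S \ A, (2⁻¹ : ℝ) ^ k x = 1 / 2 := by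
      linarith [sum_inter_add_sum_sdiff S A fun x => (2⁻¹ : ℝ) ^ k x]
    have hhalf : ∀ B ⊆ S, ∑ x ∈ B, (2⁻¹ : ℝ) ^ k x = 1 / 2 →
        B.Nonempty ∧ ∑ x ∈ B, (2⁻¹ : ℝ) ^ (k x - 1) = 1 := fun B hB h => by
      refine ⟨nonempty_of_sum_ne_zero (by rw [h]; norm_num), ?_⟩
      rw [sum_inv_two_pow_eq_half_mul fun x hx => hk x (hB hx)] at h
      linarith
    obtain ⟨hne₁, hsum₁⟩ := hhalf _ inter_subset_left hAsum
    obtain ⟨hne₂, hsum₂⟩ := hhalf _ sdiff_subset hsdiff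
    obtain ⟨t, ht, htQ⟩ := ih (S ∩ A)
      ((ssubset_iff_of_subset inter_subset_left).mpr (hne₂.imp fun x hx => by grind)) hne₁ hsum₁
    obtain ⟨f, hf, hfQ⟩ := ih (S \ A)
      ((ssubset_iff_of_subset sdiff_subset).mpr (hne₁.imp fun x hx => by grind)) hne₂ hsum₂
    exact ⟨node A t f, Realizes.node hk ht hf,
      Set.insert_subset_iff.mpr ⟨hA, Set.union_subset htQ hfQ⟩⟩

end Splitting

section Distributions

variable {α : Type} [Fintype α]

noncomputable def supp (μ : α → ℝ) : Finset α := univ.filter (μ · ≠ 0)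

theorem mem_supp {μ : α → ℝ} {x : α} : x ∈ supp μ ↔ μ x ≠ 0 := by simp [supp]

theorem IsDistribution.sum_supp {μ : α → ℝ} (hμ : IsDistribution μ) :
    ∑ x ∈ supp μ, μ x = 1 :=
  (sum_filter_ne_zero _).trans hμ.2

theorem IsDyadic.exists_exponent {μ : α → ℝ} (hμ : IsDistribution μ) (h : IsDyadic μ) :
    ∃ d : α → ℕ, ∀ x ∈ supp μ, μ x = 2⁻¹ ^ d x := by
  have hexp : ∀ x ∈ supp μ, ∃ j : ℕ, μ x = 2⁻¹ ^ j := fun x hx => by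
    obtain h0 | ⟨z, hz⟩ := h x
    · exact absurd h0 (mem_supp.mp hx)
    have hle : μ x ≤ 1 := hμ.2 ▸ single_le_sum (fun y _ => hμ.1 y) (mem_univ x)
    have hz0 : 0 ≤ z := by
      by_contra hneg
      have := one_lt_zpow_of_neg₀ (by norm_num : (0 : ℝ) < 1 / 2) (by norm_num) (not_le.mp hneg)
      linarith
    refine ⟨z.toNat, ?_⟩
    rw [hz, ← Int.toNat_of_nonneg hz0, zpow_natCast, one_div, Int.toNat_natCast]
  choose! d hd using hexp
  exact ⟨d, hd⟩

theorem sum_supp_mul_eq {μ : α → ℝ} {d : α → ℕ} (hd : ∀ x ∈ supp μ, μ x = 2⁻¹ ^ d x)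
    (f : α → ℝ) : ∑ x ∈ supp μ, μ x * f x = ∑ x ∈ supp μ, (2⁻¹ : ℝ) ^ d x * f x :=
  sum_congr rfl fun x hx => by rw [hd x hx]

variable [DecidableEq α]

theorem splitsDyadic_of_isDyadicHitter {Q : Set (Finset α)}
    (hQ : ∀ μ : α → ℝ, IsDistribution μ → IsDyadic μ → NonConstant μ →
      ∃ A ∈ Q, ∑ x ∈ A, μ x = 1 / 2) : SplitsDyadic Q := by
  intro S k hS hsum
  set ν : α → ℝ := fun x => if x ∈ S then 2⁻¹ ^ k x else 0 with hν
  have hνsum : ∀ A : Finset α, ∑ x ∈ A, ν x = ∑ x ∈ S ∩ A, (2⁻¹ : ℝ) ^ k x := fun A => by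
    rw [hν, sum_ite_mem, inter_comm]
  have hdist : IsDistribution ν :=
    ⟨fun x => by simp only [hν]; split_ifs <;> positivity, by rw [hνsum, inter_univ, hsum]⟩
  have hdy : IsDyadic ν := fun x => by
    by_cases hx : x ∈ S
    · exact .inr ⟨k x, by simp [hν, hx]⟩
    · exact .inl (if_neg hx)
  obtain ⟨a, ha, b, hb, hab⟩ := hS
  obtain ⟨A, hA, hAsum⟩ := hQ ν hdist hdy
    ⟨a, b, hab, by simp [hν, mem_coe.mp ha], by simp [hν, mem_coe.mp hb]⟩
  exact ⟨A, hA, hνsum A ▸ hAsum⟩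

theorem sum_supp_inter (μ : α → ℝ) (A : Finset α) : ∑ x ∈ supp μ ∩ A, μ x = ∑ x ∈ A, μ x := by
  rw [supp, filter_inter, univ_inter, sum_filter_ne_zero]

theorem isValid_iff_realizes {T : DTree α} {μ : α → ℝ} :
    IsValid T μ ↔ T.Realizes (supp μ) T.depth := by
  refine ⟨fun h => ⟨h.nodup, ?_, fun x hx => h.finds x (mem_supp.mp hx)⟩,
    fun h => ⟨h.nodup, fun x => ?_, fun x hx => h.find?_eq x (mem_supp.mpr hx)⟩⟩
  · ext x
    rw [List.mem_toFinset, h.mem_leaves, mem_supp]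
  · rw [← List.mem_toFinset, h.toFinset_leaves, mem_supp]

theorem cost_eq_sum_supp (T : DTree α) (μ : α → ℝ) :
    cost T μ = ∑ x ∈ supp μ, μ x * T.depth x :=
  (sum_filter_of_ne fun _ _ h => left_ne_zero_of_mul h).symm

theorem exists_isValid_usesQuestions_cost_eq {Q : Set (Finset α)} (hQ : SplitsDyadic Q)
    {T : DTree α} {μ : α → ℝ} (hT : IsValid T μ) :
    ∃ T', IsValid T' μ ∧ UsesQuestions T' Q ∧ cost T' μ = cost T μ := by
  have hkraft := (isValid_iff_realizes.mp hT).sum_inv_two_pow_eq_one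
  obtain ⟨T', hT', hQ'⟩ := exists_realizes_of_splitsDyadic hQ
    (nonempty_of_sum_ne_zero (by rw [hkraft]; exact one_ne_zero)) hkraft
  refine ⟨T', isValid_iff_realizes.mpr hT'.realizes_depth, hQ', ?_⟩
  rw [cost_eq_sum_supp, cost_eq_sum_supp]
  exact sum_congr rfl fun x hx => by rw [hT'.depth_eq hx]

theorem cQ_eq_optCost_of_splitsDyadic {Q : Set (Finset α)} (hQ : SplitsDyadic Q)
    (μ : α → ℝ) : cQ Q μ = OptCost μ := by
  refine congrArg sInf (Set.ext fun c => ⟨fun ⟨T, hT, _, hc⟩ => ⟨T, hT, hc⟩, ?_⟩)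
  rintro ⟨T, hT, rfl⟩
  obtain ⟨T', hT', hQ', hcost⟩ := exists_isValid_usesQuestions_cost_eq hQ hT
  exact ⟨T', hT', hQ', hcost.symm⟩

theorem exists_cost_eq_nat_mul {μ : α → ℝ} {c : ℝ} (hμ : ∀ x, ∃ m : ℕ, μ x = m * c)
    (T : DTree α) : ∃ m : ℕ, cost T μ = m * c := by
  choose m hm using hμ
  refine ⟨∑ x, m x * T.depth x, ?_⟩
  rw [cost]
  push_cast
  rw [sum_mul]
  exact sum_congr rfl fun x _ => by rw [hm]; ring

theorem exists_cost_eq_cQ {μ : α → ℝ} {d : α → ℕ} (hd : ∀ x ∈ supp μ, μ x = 2⁻¹ ^ d x)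
    {Q : Set (Finset α)} (hQ : ∃ T, IsValid T μ ∧ UsesQuestions T Q) :
    ∃ T, IsValid T μ ∧ UsesQuestions T Q ∧ cost T μ = cQ Q μ := by
  set D := (supp μ).sup d
  have hμ : ∀ x, ∃ m : ℕ, μ x = m * 2⁻¹ ^ D := fun x => by
    by_cases hx : x ∈ supp μ
    · exact ⟨2 ^ (D - d x), by
        rw [hd x hx, inv_two_pow_eq_two_pow_sub_mul (le_sup hx)]; push_cast; rfl⟩
    · exact ⟨0, by rw [Nat.cast_zero, zero_mul, ← not_ne_iff, ← mem_supp]; exact hx⟩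
  obtain ⟨T, hT, hTQ⟩ := hQ
  obtain ⟨T, hT, hTQ, hc⟩ := Real.csInf_mem_of_forall_exists_nat_mul
    (s := {c | ∃ T, IsValid T μ ∧ UsesQuestions T Q ∧ c = cost T μ}) (c := 2⁻¹ ^ D)
    (by positivity) ⟨cost T μ, T, hT, hTQ, rfl⟩
    (by rintro c ⟨T, -, -, rfl⟩; exact exists_cost_eq_nat_mul hμ T)
  exact ⟨T, hT, hTQ, hc.symm⟩

section Dyadic

variable {μ : α → ℝ} {d : α → ℕ}

theorem sum_mul_le_cost (hd : ∀ x ∈ supp μ, μ x = 2⁻¹ ^ d x)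
    (hkraft : ∑ x ∈ supp μ, (2⁻¹ : ℝ) ^ d x = 1) {T : DTree α} (hT : IsValid T μ) :
    ∑ x ∈ supp μ, μ x * d x ≤ cost T μ := by
  rw [cost_eq_sum_supp, sum_supp_mul_eq hd, sum_supp_mul_eq hd]
  exact sum_inv_two_pow_mul_le hkraft
    (isValid_iff_realizes.mp hT).sum_inv_two_pow_eq_one.le

theorem realizes_of_cost_le (hd : ∀ x ∈ supp μ, μ x = 2⁻¹ ^ d x)
    (hkraft : ∑ x ∈ supp μ, (2⁻¹ : ℝ) ^ d x = 1) {T : DTree α} (hT : IsValid T μ)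
    (hcost : cost T μ ≤ ∑ x ∈ supp μ, μ x * d x) : T.Realizes (supp μ) d := by
  have hR := isValid_iff_realizes.mp hT
  have hdepth : ∀ x ∈ supp μ, T.depth x = d x := by
    by_contra! ⟨x, hx, hne⟩
    rw [cost_eq_sum_supp, sum_supp_mul_eq hd, sum_supp_mul_eq hd] at hcost
    exact hcost.not_gt (sum_inv_two_pow_mul_lt hkraft hR.sum_inv_two_pow_eq_one.le hx hne.symm)
  exact ⟨hR.nodup, hR.toFinset_leaves, fun x hx => hdepth x hx ▸ hR.find?_eq x hx⟩

theorem optCost_eq_sum_mul (hd : ∀ x ∈ supp μ, μ x = 2⁻¹ ^ d x)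
    (hkraft : ∑ x ∈ supp μ, (2⁻¹ : ℝ) ^ d x = 1) :
    OptCost μ = ∑ x ∈ supp μ, μ x * d x := by
  obtain ⟨T, hT, -⟩ := exists_realizes_of_splitsDyadic splitsDyadic_univ
    (nonempty_of_sum_ne_zero (by rw [hkraft]; exact one_ne_zero)) hkraft
  have hcost : cost T μ = ∑ x ∈ supp μ, μ x * d x := by
    rw [cost_eq_sum_supp]
    exact sum_congr rfl fun x hx => by rw [hT.depth_eq hx]
  refine IsLeast.csInf_eq ⟨⟨T, isValid_iff_realizes.mpr hT.realizes_depth, hcost.symm⟩, ?_⟩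
  rintro c ⟨T', hT', rfl⟩
  exact sum_mul_le_cost hd hkraft hT'

end Dyadic

theorem exists_mem_sum_eq_half_of_cQ_eq_optCost {Q : Set (Finset α)} {μ : α → ℝ}
    (hopt : cQ Q μ = OptCost μ) (hμ : IsDistribution μ) (hdy : IsDyadic μ)
    (hnc : NonConstant μ) : ∃ A ∈ Q, ∑ x ∈ A, μ x = 1 / 2 := by
  obtain ⟨d, hd⟩ := hdy.exists_exponent hμ
  have hkraft : ∑ x ∈ supp μ, (2⁻¹ : ℝ) ^ d x = 1 :=
    (sum_congr rfl hd).symm.trans hμ.sum_supp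
  obtain ⟨a, b, hab, ha, hb⟩ := hnc
  have hnt : (supp μ).Nontrivial := ⟨a, mem_supp.mpr ha, b, mem_supp.mpr hb, hab⟩
  have hopt' := hopt.trans (optCost_eq_sum_mul hd hkraft)
  have hpos : 0 < ∑ x ∈ supp μ, μ x * d x := sum_pos (fun x hx => by
      have := one_le_of_sum_inv_two_pow_eq_one hkraft hnt hx
      rw [hd x hx]
      positivity) ⟨a, mem_supp.mpr ha⟩
  obtain ⟨T, hT, hTQ, hcost⟩ := exists_cost_eq_cQ hd (Q := Q) (by
    by_contra! hnone
    have hempty : {c | ∃ T, IsValid T μ ∧ UsesQuestions T Q ∧ c = cost T μ} = ∅ := by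
      ext c
      simpa using fun T hT hTQ _ => hnone T hT hTQ
    rw [cQ, hempty, Real.sInf_empty] at hopt'
    exact hpos.ne hopt')
  obtain ⟨A, hA, hAsum⟩ := (realizes_of_cost_le hd hkraft hT (hcost.trans hopt').le)
    |>.exists_sum_inter_eq_half hTQ hnt
  refine ⟨A, hA, ?_⟩
  rw [← sum_supp_inter, ← hAsum]
  exact sum_congr rfl fun x hx => hd x (mem_inter.mp hx).1

end Distributions

end TQ

open TQ in
/-- A set `Q` of questions is optimal (`c_Q(μ) = Opt(μ)` for every distribution) iff
it is a dyadic hitter: every non-constant dyadic distribution has a set `A ∈ Q`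
with `μ(A) = 1/2`. -/
theorem optimal_iff_dyadic_hitter (n : ℕ) (Q : Finset (Finset (Fin n))) :
    (∀ μ : Fin n → ℝ, IsDistribution μ → cQ (↑Q) μ = OptCost μ) ↔
    (∀ μ : Fin n → ℝ, IsDistribution μ → IsDyadic μ → NonConstant μ →
      ∃ A ∈ Q, ∑ x ∈ A, μ x = 1 / 2) :=
  ⟨fun hopt μ hμ hdy hnc => exists_mem_sum_eq_half_of_cQ_eq_optCost (hopt μ hμ) hμ hdy hnc,
    fun hhit μ _ => cQ_eq_optCost_of_splitsDyadic (splitsDyadic_of_isDyadicHitter hhit) μ⟩
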